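/- Let V₂ be a finite set, m₂ > 0 a constant, and E₂ : V₂×V₂ → [0,∞) symmetric vanishing on the diagonal. The operator K on ℓ²(ℕ×V₂, m^f), where m^f(x,y) = eˣ·m₂, defined by (K f)(x,y) = e^{−x}·(1/m₂)·∑_{y'∈V₂} E₂(y,y')·(f(x,y) − f(x,y')), is a compact operator (i.e. the operator (1/m₁^f(·)) ⊗ Δ_{G₂} is compact on the funnel). -/

import Mathlib

noncomputable section

open Complex

/-- The standard (unweighted) `ℓ²` space over `V`. -/
abbrev L2 (V : Type*) := lp (fun _ : V => ℂ) 2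

/-- The isometry `ℓ²(V,m) → ℓ²(V)`, `f ↦ √m·f`. -/
def emb {V : Type*} (m : V → ℝ) (f : V → ℂ) : V → ℂ :=
  fun v => (Real.sqrt (m v) : ℂ) * f v

/-- The inverse isometry `ℓ²(V) → ℓ²(V,m)`, `g ↦ g/√m`. -/
def unemb {V : Type*} (m : V → ℝ) (g : V → ℂ) : V → ℂ :=
  fun v => g v / (Real.sqrt (m v) : ℂ)

/-- Weight of the funnel: `m^f(x,y) = eˣ·m₂`. -/
def mF (V₂ : Type*) (m₂ : ℝ) : ℕ × V₂ → ℝ := fun v => Real.exp v.1 * m₂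

/-- The operator `(1/m₁^f(·)) ⊗ Δ_{G₂}` on the funnel:
`(K f)(x,y) = e^{−x}·(1/m₂)·∑_{y'} E₂(y,y')·(f(x,y) − f(x,y'))`. -/
def Kop {V₂ : Type*} [Fintype V₂] (m₂ : ℝ) (E₂ : V₂ → V₂ → ℝ)
    (f : ℕ × V₂ → ℂ) : ℕ × V₂ → ℂ := fun v =>
  ((Real.exp (-(v.1 : ℝ)) : ℝ) : ℂ) * (1 / (m₂ : ℂ)) *
    ∑ y' : V₂, ((E₂ v.2 y' : ℝ) : ℂ) * (f (v.1, v.2) - f (v.1, y'))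


/-! The weight `m^f` is constant on each fibre `{x} × V₂`, so conjugating by `f ↦ √(m^f)·f` does
not change the operator, and the operator is block diagonal with blocks `(e^{-x}/m₂)·Δ_{G₂}` on
the finite-dimensional fibres. A block-diagonal operator whose block norms tend to zero is the
norm limit of its truncations to finitely many blocks, which have finite rank; hence it is compact.
-/

open Filter Topology
open scoped ENNReal

theorem isCompactOperator_of_finiteDimensional_range {𝕜 E F : Type*} [RCLike 𝕜]
    [NormedAddCommGroup E] [NormedSpace 𝕜 E] [NormedAddCommGroup F] [NormedSpace 𝕜 F]
    (T : E →L[𝕜] F) [FiniteDimensional 𝕜 (LinearMap.range (T : E →ₗ[𝕜] F))] :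
    IsCompactOperator T :=
  (isCompactOperator_of_locallyCompactSpace_dom
    (T.codRestrict _ (LinearMap.mem_range_self (T : E →ₗ[𝕜] F)))).clm_comp
    (LinearMap.range (T : E →ₗ[𝕜] F)).subtypeL

section SupportedOn

variable {α : Type*}

def lpSupportedOn (p : ℝ≥0∞) (s : Finset α) : Submodule ℂ (lp (fun _ : α => ℂ) p) where
  carrier := {f | ∀ a ∉ s, f a = 0}
  add_mem' {f g} hf hg a ha := by simp [hf a ha, hg a ha]
  zero_mem' a _ := rfl
  smul_mem' c f hf a ha := by simp [hf a ha]

instance {p : ℝ≥0∞} (s : Finset α) : FiniteDimensional ℂ (lpSupportedOn p s) := by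
  let restrict : lpSupportedOn p s →ₗ[ℂ] (s → ℂ) :=
    { toFun f a := (f : lp (fun _ : α => ℂ) p) a
      map_add' _ _ := rfl
      map_smul' _ _ := rfl }
  refine Module.Finite.of_injective restrict fun f g hfg => ?_
  ext a
  by_cases ha : a ∈ s
  · exact congrFun hfg ⟨a, ha⟩
  · rw [f.2 a ha, g.2 a ha]

end SupportedOn

section L2

variable {α : Type*}

theorem memℓp_two_of_forall_sum_sq_le {f : α → ℂ} {C : ℝ}
    (hf : ∀ s : Finset α, ∑ a ∈ s, ‖f a‖ ^ 2 ≤ C) : Memℓp f 2 :=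
  memℓp_gen' (by simpa only [ENNReal.toReal_ofNat, Real.rpow_two] using hf)

theorem L2.norm_le_of_forall_sum_sq_le {f : L2 α} {C : ℝ} (hC : 0 ≤ C)
    (hf : ∀ s : Finset α, ∑ a ∈ s, ‖f a‖ ^ 2 ≤ C ^ 2) : ‖f‖ ≤ C :=
  lp.norm_le_of_forall_sum_le (by norm_num) hC
    (by simpa only [ENNReal.toReal_ofNat, Real.rpow_two] using hf)

theorem L2.sum_sq_le_norm_sq (f : L2 α) (s : Finset α) : ∑ a ∈ s, ‖f a‖ ^ 2 ≤ ‖f‖ ^ 2 := by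
  simpa only [ENNReal.toReal_ofNat, Real.rpow_two] using
    lp.sum_rpow_le_norm_rpow (by norm_num) f s

end L2

section BlockDiagonal

variable {ι F : Type*} [Fintype F]

def fiber (g : ι × F → ℂ) (i : ι) : EuclideanSpace ℂ F := WithLp.toLp 2 fun y => g (i, y)

theorem sum_sq_norm_fiber (g : ι × F → ℂ) (S : Finset ι) :
    ∑ i ∈ S, ‖fiber g i‖ ^ 2 = ∑ v ∈ S ×ˢ Finset.univ, ‖g v‖ ^ 2 := by
  simp only [Finset.sum_product, EuclideanSpace.norm_sq_eq, fiber]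

variable (A : ι → EuclideanSpace ℂ F →L[ℂ] EuclideanSpace ℂ F)

def blockDiagFun (g : ι × F → ℂ) : ι × F → ℂ := fun v => A v.1 (fiber g v.1) v.2

theorem sum_sq_norm_blockDiagFun_le {C : ℝ} (hA : ∀ i, ‖A i‖ ≤ C) (g : L2 (ι × F))
    (s : Finset (ι × F)) : ∑ v ∈ s, ‖blockDiagFun A g v‖ ^ 2 ≤ (C * ‖g‖) ^ 2 := by
  classical
  set S := s.image Prod.fst
  calc ∑ v ∈ s, ‖blockDiagFun A g v‖ ^ 2
      ≤ ∑ v ∈ S ×ˢ Finset.univ, ‖blockDiagFun A g v‖ ^ 2 :=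
        Finset.sum_le_sum_of_subset_of_nonneg
          (fun v hv => Finset.mem_product.2 ⟨Finset.mem_image_of_mem _ hv, Finset.mem_univ _⟩)
          (fun _ _ _ => by positivity)
    _ = ∑ i ∈ S, ‖A i (fiber g i)‖ ^ 2 := (sum_sq_norm_fiber _ S).symm
    _ ≤ ∑ i ∈ S, C ^ 2 * ‖fiber g i‖ ^ 2 := by
        gcongr with i
        calc ‖A i (fiber g i)‖ ^ 2 ≤ (‖A i‖ * ‖fiber g i‖) ^ 2 := by
              gcongr; exact (A i).le_opNorm _
          _ ≤ C ^ 2 * ‖fiber g i‖ ^ 2 := by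
              rw [mul_pow]; gcongr; exact hA i
    _ ≤ (C * ‖g‖) ^ 2 := by
        rw [← Finset.mul_sum, mul_pow, sum_sq_norm_fiber]
        exact mul_le_mul_of_nonneg_left (L2.sum_sq_le_norm_sq g _) (sq_nonneg C)

def blockDiag (hA : BddAbove (Set.range fun i => ‖A i‖)) : L2 (ι × F) →L[ℂ] L2 (ι × F) :=
  LinearMap.mkContinuousOfExistsBound
    { toFun g := ⟨blockDiagFun A g,
        memℓp_two_of_forall_sum_sq_le
          (sum_sq_norm_blockDiagFun_le A (fun i => hA.choose_spec ⟨i, rfl⟩) g)⟩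
      map_add' g h := by
        ext v
        exact congrArg (· v.2) (map_add (A v.1) (fiber g v.1) (fiber h v.1))
      map_smul' c g := by
        ext v
        exact congrArg (· v.2) (map_smul (A v.1) c (fiber g v.1)) }
    (by
      obtain ⟨C, hC0, hC⟩ := hA.exists_ge 0
      exact ⟨C, fun g => L2.norm_le_of_forall_sum_sq_le (by positivity)
        (sum_sq_norm_blockDiagFun_le A (fun i => hC _ ⟨i, rfl⟩) g)⟩)

variable {A}

@[simp]
theorem coe_blockDiag (hA : BddAbove (Set.range fun i => ‖A i‖)) (g : L2 (ι × F)) :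
    ⇑(blockDiag A hA g) = blockDiagFun A g := rfl

theorem norm_blockDiag_le (hA : BddAbove (Set.range fun i => ‖A i‖)) {C : ℝ} (hC : 0 ≤ C)
    (hAC : ∀ i, ‖A i‖ ≤ C) : ‖blockDiag A hA‖ ≤ C :=
  (blockDiag A hA).opNorm_le_bound hC fun g =>
    L2.norm_le_of_forall_sum_sq_le (by positivity) (sum_sq_norm_blockDiagFun_le A hAC g)

theorem blockDiag_sub {B : ι → EuclideanSpace ℂ F →L[ℂ] EuclideanSpace ℂ F}
    (hA : BddAbove (Set.range fun i => ‖A i‖)) (hB : BddAbove (Set.range fun i => ‖B i‖))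
    (hAB : BddAbove (Set.range fun i => ‖(A - B) i‖)) :
    blockDiag A hA - blockDiag B hB = blockDiag (A - B) hAB := by
  ext g v
  rfl

theorem isCompactOperator_blockDiag_of_finite (hA : BddAbove (Set.range fun i => ‖A i‖))
    (S : Finset ι) (hS : ∀ i ∉ S, A i = 0) : IsCompactOperator (blockDiag A hA) := by
  have : LinearMap.range (blockDiag A hA : L2 (ι × F) →ₗ[ℂ] L2 (ι × F)) ≤
      lpSupportedOn 2 (S ×ˢ Finset.univ) := by
    rintro _ ⟨g, rfl⟩ v hv
    simp [blockDiagFun, hS v.1 (by simpa using hv)]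
  have := Submodule.finiteDimensional_of_le this
  exact isCompactOperator_of_finiteDimensional_range _

theorem isCompactOperator_blockDiag (hA : BddAbove (Set.range fun i => ‖A i‖))
    (hA₀ : Tendsto (fun i => ‖A i‖) cofinite (𝓝 0)) : IsCompactOperator (blockDiag A hA) := by
  classical
  have hbdd (S : Finset ι) : BddAbove (Set.range fun i => ‖(S : Set ι).indicator A i‖) :=
    hA.range_mono _ fun i => norm_indicator_le_norm_self _ _
  have hbdd_sub (S : Finset ι) :
      BddAbove (Set.range fun i => ‖((S : Set ι).indicator A - A) i‖) :=
    hA.range_mono _ fun i => by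
      by_cases hi : i ∈ S <;> simp [hi]
  refine isCompactOperator_of_tendsto (l := atTop)
    (F := fun S : Finset ι => blockDiag ((S : Set ι).indicator A) (hbdd S)) ?_
    (Eventually.of_forall fun S => isCompactOperator_blockDiag_of_finite _ S
      fun i hi => Set.indicator_of_notMem (Finset.mem_coe.not.2 hi) _)
  rw [Metric.tendsto_atTop]
  intro ε hε
  have hfin : {i | ε / 2 ≤ ‖A i‖}.Finite := by
    simpa using Filter.eventually_cofinite.1 (hA₀.eventually (gt_mem_nhds (half_pos hε)))
  refine ⟨hfin.toFinset, fun S hS => ?_⟩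
  rw [dist_eq_norm, blockDiag_sub _ _ (hbdd_sub S)]
  refine (norm_blockDiag_le _ (half_pos hε).le fun i => ?_).trans_lt (half_lt_self hε)
  by_cases hi : i ∈ S
  · simpa [hi] using (half_pos hε).le
  · have hAi : ‖A i‖ < ε / 2 := not_le.1 fun h => hi (hS (hfin.mem_toFinset.2 h))
    simpa [hi] using hAi.le

end BlockDiagonal

section Funnel

variable {F : Type*} [Fintype F]

def graphLaplacian (E : F → F → ℝ) : EuclideanSpace ℂ F →L[ℂ] EuclideanSpace ℂ F :=
  LinearMap.toContinuousLinearMap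
    { toFun u := WithLp.toLp 2 fun y => ∑ y', (E y y' : ℂ) * (u y - u y')
      map_add' u w := by
        ext y
        simp only [PiLp.add_apply, ← Finset.sum_add_distrib]
        exact Finset.sum_congr rfl fun _ _ => by ring
      map_smul' c u := by
        ext y
        simp only [PiLp.smul_apply, smul_eq_mul, RingHom.id_apply, Finset.mul_sum]
        exact Finset.sum_congr rfl fun _ _ => by ring }

def funnelBlock (m₂ : ℝ) (E : F → F → ℝ) (x : ℕ) :
    EuclideanSpace ℂ F →L[ℂ] EuclideanSpace ℂ F :=
  (((Real.exp (-(x : ℝ)) : ℝ) : ℂ) * (1 / (m₂ : ℂ))) • graphLaplacian E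

variable (m₂ : ℝ) (E : F → F → ℝ)

theorem tendsto_norm_funnelBlock : Tendsto (fun x => ‖funnelBlock m₂ E x‖) cofinite (𝓝 0) := by
  have hexp : Tendsto (fun x : ℕ => Real.exp (-(x : ℝ))) atTop (𝓝 0) :=
    Real.tendsto_exp_neg_atTop_nhds_zero.comp tendsto_natCast_atTop_atTop
  rw [Nat.cofinite_eq_atTop]
  simpa [funnelBlock, norm_smul, mul_assoc, Complex.norm_exp] using
    hexp.mul_const (‖m₂‖⁻¹ * ‖graphLaplacian E‖)

theorem Kop_eq_blockDiagFun (g : ℕ × F → ℂ) :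
    Kop m₂ E g = blockDiagFun (funnelBlock m₂ E) g := rfl

theorem emb_Kop_unemb (hm₂ : 0 < m₂) (g : ℕ × F → ℂ) :
    emb (mF F m₂) (Kop m₂ E (unemb (mF F m₂) g)) = Kop m₂ E g := by
  ext ⟨x, y⟩
  have hs : ((Real.sqrt (Real.exp x * m₂) : ℝ) : ℂ) ≠ 0 := by
    exact_mod_cast (Real.sqrt_pos.2 (mul_pos (Real.exp_pos _) hm₂)).ne'
  simp only [emb, unemb, Kop, mF, ← sub_div, mul_div_assoc', ← Finset.sum_div]
  field_simp

end Funnel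

theorem stmt8_general {V₂ : Type*} [Fintype V₂] (m₂ : ℝ) (hm₂ : 0 < m₂)
    (E₂ : V₂ → V₂ → ℝ) :
    ∃ T : L2 (ℕ × V₂) →L[ℂ] L2 (ℕ × V₂),
      IsCompactOperator T ∧
      ∀ g : L2 (ℕ × V₂), (Function.support (g : ℕ × V₂ → ℂ)).Finite →
        ((T g : ℕ × V₂ → ℂ)
          = emb (mF V₂ m₂) (Kop m₂ E₂ (unemb (mF V₂ m₂) g))) := by
  have hA₀ := tendsto_norm_funnelBlock m₂ E₂
  refine ⟨blockDiag (funnelBlock m₂ E₂) hA₀.bddAbove_range_of_cofinite,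
    isCompactOperator_blockDiag _ hA₀, fun g _ => ?_⟩
  rw [emb_Kop_unemb m₂ E₂ hm₂, Kop_eq_blockDiagFun, coe_blockDiag]

/-- **Compactness of `(1/m₁^f(·)) ⊗ Δ_{G₂}` on the funnel `ℓ²(ℕ×V₂, m^f)`:**
there is a compact operator on `ℓ²` agreeing with it (transported by the unitary
`f ↦ √(m^f)·f`) on all finitely supported elements. -/
theorem stmt8 {V₂ : Type*} [Fintype V₂] (m₂ : ℝ) (hm₂ : 0 < m₂)
    (E₂ : V₂ → V₂ → ℝ) (hsym : ∀ y y', E₂ y y' = E₂ y' y)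
    (hpos : ∀ y y', 0 ≤ E₂ y y') (hdiag : ∀ y, E₂ y y = 0) :
    ∃ T : L2 (ℕ × V₂) →L[ℂ] L2 (ℕ × V₂),
      IsCompactOperator T ∧
      ∀ g : L2 (ℕ × V₂), (Function.support (g : ℕ × V₂ → ℂ)).Finite →
        ((T g : ℕ × V₂ → ℂ)
          = emb (mF V₂ m₂) (Kop m₂ E₂ (unemb (mF V₂ m₂) g))) :=
  stmt8_general m₂ hm₂ E₂
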